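/- arXiv:1402.1082 — 2 statements merged into one kernel-verified Lean document; each statement's English description precedes it below -/
import Mathlib

section
/- If a bounded operator H is quasi-Hermitian with a positive, bounded, and boundedly invertible metric Θ (H*Θ = ΘH), then its pseudospectrum is trivial: there is a constant C ≥ 1 such that for all ε > 0, σ_ε(H) ⊆ {z ∈ ℂ : dist(z, σ(H)) < Cε}. -/
noncomputable section

open ContinuousLinearMap
open scoped Pointwise

set_option synthInstance.maxHeartbeats 1000000
set_option maxHeartbeats 2000000

/-- Auxiliary: inverses of commuting elements commute. -/
lemma commute_inv_inv_aux {A : Type*} [Monoid A] {a b ai bi : A} (hab : a * b = b * a)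
    (ha1 : a * ai = 1) (ha2 : ai * a = 1) (hb1 : b * bi = 1) (hb2 : bi * b = 1) :
    ai * bi = bi * ai := by
  have hai_b : ai * b = b * ai := by
    calc ai * b = ai * b * (a * ai) := by rw [ha1, mul_one]
      _ = ai * (b * a) * ai := by simp only [mul_assoc]
      _ = ai * (a * b) * ai := by rw [hab]
      _ = (ai * a) * (b * ai) := by simp only [mul_assoc]
      _ = b * ai := by rw [ha2, one_mul]
  calc ai * bi = (bi * b) * (ai * bi) := by rw [hb2, one_mul]
    _ = bi * (b * ai) * bi := by simp only [mul_assoc]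
    _ = bi * (ai * b) * bi := by rw [hai_b]
    _ = bi * ai * (b * bi) := by simp only [mul_assoc]
    _ = bi * ai := by rw [hb1, mul_one]

/-- a bounded quasi-Hermitian operator (with positive, bounded, boundedly
invertible metric) has trivial pseudospectrum: there is `C ≥ 1` with
`σ_ε(H) ⊆ {z | dist(z, σ(H)) < Cε}` for all `ε > 0`. -/
theorem quasiHermitian_trivial_pseudospectrum
    {E : Type*} [NormedAddCommGroup E] [InnerProductSpace ℂ E] [CompleteSpace E]
    (H : E →L[ℂ] E) (Θ : E ≃L[ℂ] E) (hΘpos : (Θ : E →L[ℂ] E).IsPositive)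
    (hq : ContinuousLinearMap.adjoint H ∘L (Θ : E →L[ℂ] E) = (Θ : E →L[ℂ] E) ∘L H) :
    ∃ C : ℝ, 1 ≤ C ∧ ∀ ε : ℝ, 0 < ε →
      spectrum ℂ H ∪ {z : ℂ | ε⁻¹ < ‖resolvent H z‖} ⊆
        {z : ℂ | Metric.infDist z (spectrum ℂ H) < C * ε} := by
  classical
  have ha : (0 : E →L[ℂ] E) ≤ (Θ : E →L[ℂ] E) :=
    (ContinuousLinearMap.nonneg_iff_isPositive _).mpr hΘpos
  obtain ⟨s, hs_def⟩ : ∃ s : E →L[ℂ] E, s = CFC.sqrt (Θ : E →L[ℂ] E) := ⟨_, rfl⟩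
  have hss : s * s = (Θ : E →L[ℂ] E) := by
    rw [hs_def]; exact CFC.sqrt_mul_sqrt_self _ ha
  have hs_sa : IsSelfAdjoint s := by
    rw [hs_def]; exact (CFC.sqrt_nonneg _).isSelfAdjoint
  obtain ⟨ainv, hainv_def⟩ : ∃ v : E →L[ℂ] E, v = (Θ.symm : E →L[ℂ] E) := ⟨_, rfl⟩
  have h1 : (Θ : E →L[ℂ] E) * ainv = 1 := by
    ext x; simp [hainv_def, ContinuousLinearMap.mul_apply]
  have h2 : ainv * (Θ : E →L[ℂ] E) = 1 := by
    ext x; simp [hainv_def, ContinuousLinearMap.mul_apply]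
  have hsa : s * (Θ : E →L[ℂ] E) = (Θ : E →L[ℂ] E) * s := by
    rw [← hss, mul_assoc]
  have hcomm : ainv * s = s * ainv := by
    calc ainv * s = ainv * s * ((Θ : E →L[ℂ] E) * ainv) := by rw [h1, mul_one]
      _ = ainv * (s * (Θ : E →L[ℂ] E)) * ainv := by simp only [mul_assoc]
      _ = ainv * ((Θ : E →L[ℂ] E) * s) * ainv := by rw [hsa]
      _ = (ainv * (Θ : E →L[ℂ] E)) * (s * ainv) := by simp only [mul_assoc]
      _ = s * ainv := by rw [h2, one_mul]
  obtain ⟨t, ht_def⟩ : ∃ t : E →L[ℂ] E, t = s * ainv := ⟨_, rfl⟩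
  have hst : s * t = 1 := by rw [ht_def, ← mul_assoc, hss, h1]
  have hts : t * s = 1 := by
    rw [ht_def, mul_assoc, hcomm, ← mul_assoc, hss, h1]
  have hainv_sa : IsSelfAdjoint ainv := by
    rw [IsSelfAdjoint]
    calc star ainv = star ainv * ((Θ : E →L[ℂ] E) * ainv) := by rw [h1, mul_one]
      _ = (star ainv * (Θ : E →L[ℂ] E)) * ainv := by rw [mul_assoc]
      _ = (star ainv * star (Θ : E →L[ℂ] E)) * ainv := by rw [hΘpos.isSelfAdjoint.star_eq]
      _ = star ((Θ : E →L[ℂ] E) * ainv) * ainv := by rw [star_mul]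
      _ = ainv := by rw [h1, star_one, one_mul]
  have ht_sa : IsSelfAdjoint t := by
    rw [IsSelfAdjoint, ht_def, star_mul, hainv_sa.star_eq, hs_sa.star_eq, hcomm]
  have hH : star H * (Θ : E →L[ℂ] E) = (Θ : E →L[ℂ] E) * H := by
    rw [ContinuousLinearMap.star_eq_adjoint]; exact hq
  obtain ⟨N, hN_def⟩ : ∃ N : E →L[ℂ] E, N = s * H * t := ⟨_, rfl⟩
  have hsst : (s * s) * t = s := by rw [mul_assoc, hst, mul_one]
  have hN_sa : IsSelfAdjoint N := by
    rw [IsSelfAdjoint, hN_def, star_mul, star_mul, ht_sa.star_eq, hs_sa.star_eq]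
    calc t * (star H * s)
        = t * (star H * ((s * s) * t)) := by rw [hsst]
      _ = t * ((star H * (s * s)) * t) := by noncomm_ring
      _ = t * (((s * s) * H) * t) := by rw [hss, hH, ← hss]
      _ = (t * s) * (s * (H * t)) := by noncomm_ring
      _ = s * H * t := by rw [hts, one_mul, ← mul_assoc]
  have hspec : spectrum ℂ N = spectrum ℂ H := by
    have h := spectrum.units_conjugate (R := ℂ) (a := H) (u := ⟨s, t, hst, hts⟩)
    rw [hN_def]
    simpa using h
  refine ⟨max 1 (‖s‖ * ‖t‖), le_max_left _ _, ?_⟩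
  intro ε hε z hz
  set C := max 1 (‖s‖ * ‖t‖) with hC_def
  have hC1 : (1 : ℝ) ≤ C := le_max_left _ _
  have hCpos : (0 : ℝ) < C := lt_of_lt_of_le one_pos hC1
  simp only [Set.mem_setOf_eq]
  by_cases hzσ : z ∈ spectrum ℂ H
  · rw [Metric.infDist_zero_of_mem hzσ]; exact mul_pos hCpos hε
  · rcases hz with hz | hz
    · exact absurd hz hzσ
    simp only [Set.mem_setOf_eq] at hz
    rcases subsingleton_or_nontrivial (E →L[ℂ] E) with hsub | hnt
    · exfalso
      have h0 : resolvent H z = 0 := Subsingleton.elim _ _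
      rw [h0, norm_zero] at hz
      exact absurd hz (not_lt.mpr (inv_nonneg.mpr hε.le))
    have hne : (spectrum ℂ H).Nonempty := spectrum.nonempty H
    have hd : 0 < Metric.infDist z (spectrum ℂ H) :=
      ((spectrum.isClosed (𝕜 := ℂ) H).notMem_iff_infDist_pos hne).mp hzσ
    obtain ⟨d, hd_def⟩ : ∃ d : ℝ, d = Metric.infDist z (spectrum ℂ H) := ⟨_, rfl⟩
    rw [← hd_def] at hd ⊢
    have hzN : z ∉ spectrum ℂ N := by rw [hspec]; exact hzσ
    obtain ⟨x, hx_def⟩ : ∃ x : E →L[ℂ] E, x = algebraMap ℂ (E →L[ℂ] E) z - H := ⟨_, rfl⟩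
    obtain ⟨y, hy_def⟩ : ∃ y : E →L[ℂ] E, y = algebraMap ℂ (E →L[ℂ] E) z - N := ⟨_, rfl⟩
    have hxu : IsUnit x := by rw [hx_def]; exact spectrum.notMem_iff.mp hzσ
    have hyu : IsUnit y := by rw [hy_def]; exact spectrum.notMem_iff.mp hzN
    obtain ⟨xinv, hxinv_def⟩ : ∃ w : E →L[ℂ] E, w = resolvent H z := ⟨_, rfl⟩
    obtain ⟨R, hR_def⟩ : ∃ R : E →L[ℂ] E, R = resolvent N z := ⟨_, rfl⟩
    have hxinv : xinv = Ring.inverse x := by rw [hxinv_def, resolvent, hx_def]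
    have hRinv : R = Ring.inverse y := by rw [hR_def, resolvent, hy_def]
    have hx1 : x * xinv = 1 := by rw [hxinv]; exact Ring.mul_inverse_cancel x hxu
    have hx2 : xinv * x = 1 := by rw [hxinv]; exact Ring.inverse_mul_cancel x hxu
    have hy1 : y * R = 1 := by rw [hRinv]; exact Ring.mul_inverse_cancel y hyu
    have hy2 : R * y = 1 := by rw [hRinv]; exact Ring.inverse_mul_cancel y hyu
    have key : y = s * x * t := by
      rw [hy_def, hx_def, hN_def, mul_sub, sub_mul]
      congr 1
      calc algebraMap ℂ (E →L[ℂ] E) z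
          = algebraMap ℂ (E →L[ℂ] E) z * (s * t) := by rw [hst, mul_one]
        _ = (algebraMap ℂ (E →L[ℂ] E) z * s) * t := by rw [mul_assoc]
        _ = (s * algebraMap ℂ (E →L[ℂ] E) z) * t := by rw [Algebra.commutes]
    have hR_eq : R = s * xinv * t := by
      have hw : y * (s * xinv * t) = 1 := by
        calc y * (s * xinv * t) = (s * x * t) * (s * xinv * t) := by rw [key]
          _ = s * (x * ((t * s) * (xinv * t))) := by noncomm_ring
          _ = s * (x * (xinv * t)) := by rw [hts, one_mul]
          _ = (s * ((x * xinv) * t)) := by noncomm_ring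
          _ = 1 := by rw [hx1, one_mul, hst]
      calc R = R * (y * (s * xinv * t)) := by rw [hw, mul_one]
        _ = (R * y) * (s * xinv * t) := by rw [← mul_assoc]
        _ = s * xinv * t := by rw [hy2, one_mul]
    have hres_decomp : resolvent H z = t * R * s := by
      rw [← hxinv_def, hR_eq]
      calc xinv = 1 * xinv * 1 := by rw [one_mul, mul_one]
        _ = (t * s) * xinv * (t * s) := by rw [hts]
        _ = t * (s * xinv * t) * s := by noncomm_ring
    -- star-normality of R
    have hystar : star y = algebraMap ℂ (E →L[ℂ] E) (star z) - N := by
      rw [hy_def, star_sub, hN_sa.star_eq, algebraMap_star_comm]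
    have hyc : y * star y = star y * y := by
      rw [hystar, hy_def]
      exact Commute.sub_left (Algebra.commute_algebraMap_left z _)
        (Commute.sub_right (Algebra.commute_algebraMap_right (star z) N) (Commute.refl N))
    have hq1 : star y * star R = 1 := by rw [← star_mul, hy2, star_one]
    have hq2 : star R * star y = 1 := by rw [← star_mul, hy1, star_one]
    have hRnormal : IsStarNormal R := by
      constructor
      exact (commute_inv_inv_aux hyc hy1 hy2 hq1 hq2).symm
    haveI := hRnormal
    have hrad : spectralRadius ℂ R = (‖R‖₊ : ENNReal) :=
      IsStarNormal.spectralRadius_eq_nnnorm R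
    have hRy : (↑hyu.unit⁻¹ : E →L[ℂ] E) = R := by
      calc (↑hyu.unit⁻¹ : E →L[ℂ] E) = ↑hyu.unit⁻¹ * (y * R) := by rw [hy1, mul_one]
        _ = (↑hyu.unit⁻¹ * y) * R := by rw [← mul_assoc]
        _ = R := by rw [hyu.val_inv_mul, one_mul]
    have hspecR : spectrum ℂ R = (spectrum ℂ y)⁻¹ := by
      have h : (spectrum ℂ (↑hyu.unit : E →L[ℂ] E))⁻¹
          = spectrum ℂ (↑hyu.unit⁻¹ : E →L[ℂ] E) := spectrum.map_inv hyu.unit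
      rw [hyu.unit_spec] at h
      rw [← hRy, ← h]
    have hspecy : spectrum ℂ y = ({z} : Set ℂ) - spectrum ℂ H := by
      rw [hy_def, ← spectrum.singleton_sub_eq N z, hspec]
    set D : NNReal := ⟨d, hd.le⟩ with hD_def
    have hDR : spectralRadius ℂ R ≤ ((D⁻¹ : NNReal) : ENNReal) := by
      rw [spectralRadius]
      refine iSup₂_le fun k hk => ?_
      rw [hspecR] at hk
      have hk' : k⁻¹ ∈ spectrum ℂ y := Set.mem_inv.mp hk
      rw [hspecy] at hk'
      obtain ⟨w, hw, lam, hlam, hsum⟩ := Set.mem_sub.mp hk'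
      rw [Set.mem_singleton_iff] at hw
      subst hw
      have hdist : d ≤ ‖k⁻¹‖ := by
        rw [← hsum, ← dist_eq_norm, hd_def]
        exact Metric.infDist_le_dist_of_mem hlam
      have hk_norm : ‖k‖ ≤ d⁻¹ := by
        have hk_eq : ‖k‖ = ‖k⁻¹‖⁻¹ := by rw [norm_inv, inv_inv]
        rw [hk_eq]
        exact inv_anti₀ hd hdist
      rw [ENNReal.coe_le_coe, ← NNReal.coe_le_coe]
      push_cast
      exact hk_norm
    have hRnorm : ‖R‖ ≤ d⁻¹ := by
      rw [hrad, ENNReal.coe_le_coe] at hDR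
      have h := NNReal.coe_le_coe.mpr hDR
      rw [coe_nnnorm] at h
      exact h
    have hnorm : ‖resolvent H z‖ ≤ C * d⁻¹ := by
      rw [hres_decomp]
      calc ‖t * R * s‖ ≤ ‖t * R‖ * ‖s‖ := norm_mul_le _ _
        _ ≤ ‖t‖ * ‖R‖ * ‖s‖ := by
            gcongr
            exact norm_mul_le _ _
        _ ≤ ‖t‖ * d⁻¹ * ‖s‖ := by gcongr
        _ = ‖s‖ * ‖t‖ * d⁻¹ := by ring
        _ ≤ C * d⁻¹ := by
            exact mul_le_mul_of_nonneg_right (le_max_right _ _) (inv_nonneg.mpr hd.le)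
    have h3 : ε⁻¹ < C / d := by
      rw [div_eq_mul_inv]
      exact lt_of_lt_of_le hz hnorm
    have h4 : ε⁻¹ * d < C := (lt_div_iff₀ hd).mp h3
    calc d = ε * (ε⁻¹ * d) := by field_simp
      _ < ε * C := mul_lt_mul_of_pos_left h4 hε
      _ = C * ε := mul_comm _ _
end
end

section
/- For the imaginary Airy operator H = −d²/dx² + ix on C_0^∞(ℝ) ⊂ L²(ℝ), there exists δ₀ > 0 and a constant c > 0 such that for all ψ ∈ C_0^∞(ℝ): ‖Hψ‖² ≥ c(‖ψ''‖² + ‖xψ‖²) − c⁻¹‖ψ‖². -/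
open MeasureTheory

noncomputable section

lemma int_deriv_zero (f : ℝ → ℝ) (hf : ContDiff ℝ 1 f) (hc : HasCompactSupport f) :
    ∫ x : ℝ, deriv f x = 0 := by
  have hcont : Continuous (deriv f) := hf.continuous_deriv le_rfl
  have hint : Integrable (deriv f) :=
    hcont.integrable_of_hasCompactSupport hc.deriv
  have h1 := HasCompactSupport.integral_Iic_deriv_eq hf hc 0
  have h2 := HasCompactSupport.integral_Ioi_deriv_eq hf hc 0
  rw [← intervalIntegral.integral_Iic_add_Ioi hint.integrableOn hint.integrableOn, h1, h2]
  ring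

lemma ibp (f g : ℝ → ℂ) (hf : ContDiff ℝ (⊤ : ℕ∞) f) (hg : ContDiff ℝ (⊤ : ℕ∞) g)
    (hgc : HasCompactSupport g) :
    (∫ x : ℝ, (deriv f x * (starRingEnd ℂ) (g x)).re)
      + ∫ x : ℝ, (f x * (starRingEnd ℂ) (deriv g x)).re = 0 := by
  set h : ℝ → ℝ := fun x => (f x * (starRingEnd ℂ) (g x)).re with hh
  have hconjg : ContDiff ℝ (⊤ : ℕ∞) fun x => (starRingEnd ℂ) (g x) :=
    Complex.conjCLE.contDiff.comp hg
  have hch : ContDiff ℝ 1 h :=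
    (Complex.reCLM.contDiff.comp (hf.mul hconjg)).of_le (by simp)
  have hhc : HasCompactSupport h := by
    have h1 : HasCompactSupport fun x => f x * (starRingEnd ℂ) (g x) := by
      have : HasCompactSupport fun x => (starRingEnd ℂ) (g x) :=
        hgc.comp_left (map_zero _)
      exact this.mul_left
    exact h1.comp_left (g := Complex.re) rfl
  have hd : ∀ x, HasDerivAt h
      ((deriv f x * (starRingEnd ℂ) (g x)).re + (f x * (starRingEnd ℂ) (deriv g x)).re) x := by
    intro x
    have hfd : HasDerivAt f (deriv f x) x :=
      ((hf.differentiable (by simp)) x).hasDerivAt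
    have hgd : HasDerivAt g (deriv g x) x :=
      ((hg.differentiable (by simp)) x).hasDerivAt
    have hconj : HasDerivAt (fun y => (starRingEnd ℂ) (g y)) ((starRingEnd ℂ) (deriv g x)) x :=
      hgd.star
    have hmul := hfd.mul hconj
    have := Complex.reCLM.hasFDerivAt.comp_hasDerivAt x hmul
    simpa [hh, Function.comp_def, Pi.mul_def] using this
  have hderiv : deriv h = fun x =>
      (deriv f x * (starRingEnd ℂ) (g x)).re + (f x * (starRingEnd ℂ) (deriv g x)).re := by
    funext x; exact (hd x).deriv
  have hz := int_deriv_zero h hch hhc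
  rw [hderiv] at hz
  have hi1 : Integrable fun x => (deriv f x * (starRingEnd ℂ) (g x)).re := by
    apply Continuous.integrable_of_hasCompactSupport
    · have hdf : Continuous (deriv f) := hf.continuous_deriv (by simp)
      have hgc2 : Continuous g := hg.continuous
      fun_prop
    · have h1 : HasCompactSupport fun x => (starRingEnd ℂ) (g x) :=
        hgc.comp_left (map_zero _)
      exact (h1.mul_left (f := deriv f)).comp_left (g := Complex.re) rfl
  have hi2 : Integrable fun x => (f x * (starRingEnd ℂ) (deriv g x)).re := by
    apply Continuous.integrable_of_hasCompactSupport
    · have hdg : Continuous (deriv g) := hg.continuous_deriv (by simp)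
      have hfc : Continuous f := hf.continuous
      fun_prop
    · have h1 : HasCompactSupport fun x => (starRingEnd ℂ) (deriv g x) :=
        hgc.deriv.comp_left (map_zero _)
      exact (h1.mul_left (f := f)).comp_left (g := Complex.re) rfl
  rw [integral_add hi1 hi2] at hz
  exact hz

lemma expand_sq (z w : ℂ) :
    ‖-z + w‖ ^ 2 = ‖z‖ ^ 2 + ‖w‖ ^ 2 - 2 * (z * (starRingEnd ℂ) w).re := by
  have e : ∀ u : ℂ, ‖u‖ ^ 2 = Complex.normSq u := fun u => by
    rw [Complex.sq_norm]
  simp only [e, Complex.normSq_apply, Complex.add_re, Complex.add_im, Complex.neg_re,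
    Complex.neg_im, Complex.mul_re, Complex.mul_im, Complex.conj_re, Complex.conj_im]
  ring

lemma zkey (z : ℂ) (x : ℝ) : (z * (starRingEnd ℂ) (Complex.I * x * z)).re = 0 := by
  simp only [Complex.mul_re, Complex.mul_im, Complex.conj_re, Complex.conj_im,
    Complex.I_re, Complex.I_im, Complex.ofReal_re, Complex.ofReal_im]
  ring

lemma selfre (z : ℂ) : (z * (starRingEnd ℂ) z).re = ‖z‖ ^ 2 := by
  rw [Complex.mul_conj]
  simp [Complex.sq_norm]

lemma bnd (z w : ℂ) : -((‖z‖ ^ 2 + ‖w‖ ^ 2) / 2) ≤ (z * (starRingEnd ℂ) w).re := by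
  have h1 : |(z * (starRingEnd ℂ) w).re| ≤ ‖z * (starRingEnd ℂ) w‖ := by
    exact Complex.abs_re_le_norm _
  have h2 : ‖z * (starRingEnd ℂ) w‖ = ‖z‖ * ‖w‖ := by
    rw [norm_mul, RCLike.norm_conj]
  have h3 := neg_abs_le ((z * (starRingEnd ℂ) w).re)
  nlinarith [sq_nonneg (‖z‖ - ‖w‖), norm_nonneg z, norm_nonneg w]

/-- for the imaginary Airy operator `H = -d²/dx² + ix` on `C_0^∞(ℝ)`, there
exist `δ₀ > 0` and `c > 0` with `‖Hψ‖² ≥ c(‖ψ''‖² + ‖xψ‖²) - c⁻¹‖ψ‖²` for all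
smooth compactly supported `ψ`. -/
theorem imaginary_airy_graph_norm_bound :
    ∃ δ₀ : ℝ, 0 < δ₀ ∧ ∃ c : ℝ, 0 < c ∧
      ∀ ψ : ℝ → ℂ, ContDiff ℝ (⊤ : ℕ∞) ψ → HasCompactSupport ψ →
        c * ((∫ x : ℝ, ‖deriv (deriv ψ) x‖ ^ 2) + ∫ x : ℝ, ‖(x : ℂ) * ψ x‖ ^ 2)
            - c⁻¹ * (∫ x : ℝ, ‖ψ x‖ ^ 2)
          ≤ ∫ x : ℝ, ‖-(deriv (deriv ψ) x) + Complex.I * (x : ℂ) * ψ x‖ ^ 2 := by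
  refine ⟨1, one_pos, 1/2, by norm_num, ?_⟩
  intro ψ hψ hψc
  -- basic regularity
  have hψ1 : Differentiable ℝ ψ := hψ.differentiable (by simp)
  have htop : ∀ f : ℝ → ℂ, ContDiff ℝ (⊤ : ℕ∞) f → ContDiff ℝ (⊤ : ℕ∞) (deriv f) := by
    intro f hf
    have hf' : ContDiff ℝ (((⊤ : ℕ∞) : WithTop ℕ∞) + 1) f :=
      hf.of_le (by exact_mod_cast (le_top : ((⊤ : ℕ∞) + 1 : ℕ∞) ≤ ⊤))
    exact (contDiff_succ_iff_deriv.mp hf').2.2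
  have hψ' : ContDiff ℝ (⊤ : ℕ∞) (deriv ψ) := htop ψ hψ
  have hψ'' : ContDiff ℝ (⊤ : ℕ∞) (deriv (deriv ψ)) := htop _ hψ'
  set g : ℝ → ℂ := fun x => Complex.I * (x : ℂ) * ψ x with hgdef
  have hg : ContDiff ℝ (⊤ : ℕ∞) g :=
    ((contDiff_const.mul Complex.ofRealCLM.contDiff).mul hψ)
  have hgc : HasCompactSupport g := hψc.mul_left
  -- derivative of g
  have hgd : ∀ x : ℝ, HasDerivAt g (Complex.I * ψ x + Complex.I * x * deriv ψ x) x := by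
    intro x
    have h1 : HasDerivAt (fun y : ℝ => Complex.I * (y : ℂ)) Complex.I x := by
      simpa using (Complex.ofRealCLM.hasDerivAt (x := x)).const_mul Complex.I
    have h2 := h1.mul (hψ1 x).hasDerivAt
    simpa [hgdef, Pi.mul_def, mul_one] using h2
  have hgderiv : deriv g = fun x : ℝ => Complex.I * ψ x + Complex.I * x * deriv ψ x :=
    funext fun x => (hgd x).deriv
  -- integrability helpers
  have key : ∀ F : ℝ → ℂ, Continuous F → HasCompactSupport F →
      Integrable fun x : ℝ => ‖F x‖ ^ 2 := by
    intro F hFc hFs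
    exact (by fun_prop : Continuous fun x => ‖F x‖ ^ 2).integrable_of_hasCompactSupport
      (hFs.comp_left (g := fun z : ℂ => ‖z‖ ^ 2) (by simp))
  have key2 : ∀ F G : ℝ → ℂ, Continuous F → Continuous G → HasCompactSupport G →
      Integrable fun x : ℝ => (F x * (starRingEnd ℂ) (G x)).re := by
    intro F G hFc hGc hGs
    apply Continuous.integrable_of_hasCompactSupport
    · fun_prop
    · exact ((hGs.comp_left (map_zero _)).mul_left (f := F)).comp_left (g := Complex.re) rfl
  have intA : Integrable fun x : ℝ => ‖deriv (deriv ψ) x‖ ^ 2 :=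
    key _ hψ''.continuous hψc.deriv.deriv
  have intB : Integrable fun x : ℝ => ‖(x : ℂ) * ψ x‖ ^ 2 :=
    key (fun x : ℝ => (x : ℂ) * ψ x) (by fun_prop) hψc.mul_left
  have intC : Integrable fun x : ℝ => ‖ψ x‖ ^ 2 := key ψ hψ.continuous hψc
  have intD : Integrable fun x : ℝ => ‖deriv ψ x‖ ^ 2 := key _ hψ'.continuous hψc.deriv
  have intCross : Integrable fun x : ℝ => (deriv (deriv ψ) x * (starRingEnd ℂ) (g x)).re :=
    key2 (deriv (deriv ψ)) g hψ''.continuous hg.continuous hgc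
  have intS : Integrable fun x : ℝ => (deriv ψ x * (starRingEnd ℂ) (Complex.I * ψ x)).re :=
    key2 (deriv ψ) (fun x : ℝ => Complex.I * ψ x) hψ'.continuous (by fun_prop) hψc.mul_left
  have intDD : Integrable fun x : ℝ => (deriv (deriv ψ) x * (starRingEnd ℂ) (ψ x)).re :=
    key2 (deriv (deriv ψ)) ψ hψ''.continuous hψ.continuous hψc
  set A := ∫ x : ℝ, ‖deriv (deriv ψ) x‖ ^ 2 with hA
  set B := ∫ x : ℝ, ‖(x : ℂ) * ψ x‖ ^ 2 with hB
  set C := ∫ x : ℝ, ‖ψ x‖ ^ 2 with hC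
  set D := ∫ x : ℝ, ‖deriv ψ x‖ ^ 2 with hD
  set Icross := ∫ x : ℝ, (deriv (deriv ψ) x * (starRingEnd ℂ) (g x)).re with hIc
  set S := ∫ x : ℝ, (deriv ψ x * (starRingEnd ℂ) (Complex.I * ψ x)).re with hS
  have hB0 : 0 ≤ B := integral_nonneg fun x => by positivity
  have hC0 : 0 ≤ C := integral_nonneg fun x => by positivity
  -- expansion of the graph norm
  have hsplit : (∫ x : ℝ, ‖-(deriv (deriv ψ) x) + Complex.I * (x : ℂ) * ψ x‖ ^ 2)
      = A + B - 2 * Icross := by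
    have e : ∀ x : ℝ, ‖-(deriv (deriv ψ) x) + Complex.I * (x : ℂ) * ψ x‖ ^ 2
        = ‖deriv (deriv ψ) x‖ ^ 2 + ‖(x : ℂ) * ψ x‖ ^ 2
          - 2 * (deriv (deriv ψ) x * (starRingEnd ℂ) (g x)).re := by
      intro x
      have := expand_sq (deriv (deriv ψ) x) (Complex.I * (x : ℂ) * ψ x)
      rw [this]
      have : ‖Complex.I * (x : ℂ) * ψ x‖ = ‖(x : ℂ) * ψ x‖ := by
        rw [mul_assoc, norm_mul, Complex.norm_I, one_mul]
      rw [this]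
    calc (∫ x : ℝ, ‖-(deriv (deriv ψ) x) + Complex.I * (x : ℂ) * ψ x‖ ^ 2)
        = ∫ x : ℝ, (‖deriv (deriv ψ) x‖ ^ 2 + ‖(x : ℂ) * ψ x‖ ^ 2
            - 2 * (deriv (deriv ψ) x * (starRingEnd ℂ) (g x)).re) := by
          exact integral_congr_ae (Filter.Eventually.of_forall e)
      _ = A + B - 2 * Icross := by
          have hint1 : Integrable fun x : ℝ => ‖deriv (deriv ψ) x‖ ^ 2 + ‖(x : ℂ) * ψ x‖ ^ 2 :=
            intA.add intB
          have hint2 : Integrable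
              fun x : ℝ => 2 * (deriv (deriv ψ) x * (starRingEnd ℂ) (g x)).re :=
            intCross.const_mul 2
          rw [integral_sub hint1 hint2, integral_add intA intB, integral_const_mul]
  -- first integration by parts
  have hibp1 := ibp (deriv ψ) g hψ' hg hgc
  have hpt : (fun x : ℝ => (deriv ψ x * (starRingEnd ℂ) (deriv g x)).re)
      = fun x : ℝ => (deriv ψ x * (starRingEnd ℂ) (Complex.I * ψ x)).re := by
    funext x
    rw [hgderiv]
    simp only [map_add, mul_add, Complex.add_re]
    rw [zkey, add_zero]
  rw [hpt] at hibp1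
  -- hibp1 : Icross + S = 0
  have hS_lb : -((D + C) / 2) ≤ S := by
    have hneg : Integrable fun x : ℝ => -((‖deriv ψ x‖ ^ 2 + ‖ψ x‖ ^ 2) / 2) :=
      ((intD.add intC).div_const 2).neg
    have hmono : (∫ x : ℝ, -((‖deriv ψ x‖ ^ 2 + ‖ψ x‖ ^ 2) / 2)) ≤ S := by
      apply integral_mono hneg intS
      intro x
      show -((‖deriv ψ x‖ ^ 2 + ‖ψ x‖ ^ 2) / 2)
        ≤ (deriv ψ x * (starRingEnd ℂ) (Complex.I * ψ x)).re
      have h := bnd (deriv ψ x) (Complex.I * ψ x)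
      rw [norm_mul, Complex.norm_I, one_mul] at h
      exact h
    have heq : (∫ x : ℝ, -((‖deriv ψ x‖ ^ 2 + ‖ψ x‖ ^ 2) / 2)) = -((D + C) / 2) := by
      rw [integral_neg, integral_div, integral_add intD intC]
    linarith [hmono, heq.ge, heq.le]
  -- second integration by parts
  have hibp2 := ibp (deriv ψ) ψ hψ' hψ hψc
  have hpt2 : (fun x : ℝ => (deriv ψ x * (starRingEnd ℂ) (deriv ψ x)).re)
      = fun x : ℝ => ‖deriv ψ x‖ ^ 2 := funext fun x => selfre _
  rw [hpt2] at hibp2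
  -- hibp2 : ∫ (ψ'' conj ψ).re + D = 0
  have hD_ub : D ≤ (A + C) / 2 := by
    have hint3 : Integrable fun x : ℝ => (‖deriv (deriv ψ) x‖ ^ 2 + ‖ψ x‖ ^ 2) / 2 :=
      (intA.add intC).div_const 2
    have hmono : (∫ x : ℝ, -((deriv (deriv ψ) x * (starRingEnd ℂ) (ψ x)).re))
        ≤ ∫ x : ℝ, (‖deriv (deriv ψ) x‖ ^ 2 + ‖ψ x‖ ^ 2) / 2 := by
      apply integral_mono intDD.neg hint3
      intro x
      show -((deriv (deriv ψ) x * (starRingEnd ℂ) (ψ x)).re)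
        ≤ (‖deriv (deriv ψ) x‖ ^ 2 + ‖ψ x‖ ^ 2) / 2
      have := bnd (deriv (deriv ψ) x) (ψ x)
      linarith
    rw [integral_neg] at hmono
    rw [integral_div, integral_add intA intC] at hmono
    linarith
  rw [hsplit]
  have hhalf : ((1 : ℝ)/2)⁻¹ = 2 := by norm_num
  rw [hhalf]
  linarith

end
end
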